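/- For a Lie algebra L and k ≥ 1, the k-th term of the lower central series of L is zero (i.e., all nested brackets of k+1 elements vanish) if and only if every linear endomorphism of L is a Leibniz-derivation of order k. -/

import Mathlib

/-!
Feeding the rank-one maps `u ↦ f u • c` into the Leibniz rule gives
`f [x₀,…,xₖ] • c = ∑ᵢ f xᵢ • [x₀,…,c,…,xₖ]` (with `c` in slot `i`). If `f` kills `x₀,…,x_{k-1}`
but not some `z`, this says that `ad x₀ ∘ ⋯ ∘ ad x_{k-1}` is a scalar `μ`; since it kills `x_{k-1}`,
either `μ = 0` or `x_{k-1} = 0`, and the bracket vanishes either way. This settles every `x` whose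
first `k` entries do not span `L`. Otherwise `L` is finite-dimensional, and the same argument with
`x₀ = ⋯ = x_{k-1} = a` shows that every `ad a` is nilpotent, so by Engel's theorem `L` has a nonzero
central element `z`. Choosing `f z = 1` and `c = x₀` and putting `z` in slot `0` kills every term
of the Leibniz rule except `[x₀,…,xₖ]`.
-/
open Finset

/-- Right-nested bracket `[x₁,[x₂,…,[x_k,x_{k+1}]…]]` of a list of elements. -/
def nestedBracket {L : Type*} [LieRing L] : List L → L
  | [] => 0
  | [x] => x
  | x :: xs => ⁅x, nestedBracket xs⁆

/-- A Leibniz-derivation of order `k` of a Lie algebra. -/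
def IsLeibnizDerivation {F L : Type*} [CommRing F] [LieRing L] [LieAlgebra F L] (k : ℕ)
    (P : L →ₗ[F] L) : Prop :=
  ∀ x : Fin (k + 1) → L,
    P (nestedBracket (List.ofFn x)) =
      ∑ i : Fin (k + 1), nestedBracket (List.ofFn (Function.update x i (P (x i))))

open LieAlgebra

section LieRing

variable {L : Type*} [LieRing L]

theorem nestedBracket_cons {x : L} {l : List L} (hl : l ≠ []) :
    nestedBracket (x :: l) = ⁅x, nestedBracket l⁆ := by
  obtain ⟨y, l, rfl⟩ := List.exists_cons_of_ne_nil hl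
  rfl

theorem nestedBracket_ofFn_cons {n : ℕ} (x : L) (p : Fin (n + 1) → L) :
    nestedBracket (List.ofFn (Fin.cons x p : Fin (n + 2) → L)) =
      ⁅x, nestedBracket (List.ofFn p)⁆ := by
  rw [List.ofFn_succ, nestedBracket_cons (by simp)]
  simp

theorem nestedBracket_eq_zero_of_zero_mem {l : List L} (h : (0 : L) ∈ l) :
    nestedBracket l = 0 := by
  induction l with
  | nil => simp at h
  | cons x l ih =>
    rcases eq_or_ne l [] with rfl | hl
    · simpa [nestedBracket, eq_comm] using h
    rw [nestedBracket_cons hl]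
    rcases List.mem_cons.mp h with rfl | h
    · exact zero_lie _
    · rw [ih h, lie_zero]

theorem nestedBracket_append_self_self (l : List L) (a : L) :
    nestedBracket (l ++ [a, a]) = 0 := by
  induction l with
  | nil => exact lie_self a
  | cons x l ih => rw [List.cons_append, nestedBracket_cons (by simp), ih, lie_zero]

end LieRing

section

variable {F L : Type*} [Field F] [LieRing L] [LieAlgebra F L]

theorem nestedBracket_append_singleton (l : List L) (z : L) :
    nestedBracket (l ++ [z]) = (l.map (ad F L)).prod z := by
  induction l with
  | nil => rfl
  | cons x l ih =>
    rw [List.cons_append, nestedBracket_cons (by simp), ih]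
    rfl

theorem nestedBracket_ofFn_snoc {k : ℕ} (p : Fin k → L) (z : L) :
    nestedBracket (List.ofFn (Fin.snoc p z : Fin (k + 1) → L)) =
      ((List.ofFn p).map (ad F L)).prod z := by
  rw [List.ofFn_succ', List.concat_eq_append, ← nestedBracket_append_singleton]
  simp

theorem nestedBracket_ofFn_snoc_last {n : ℕ} (p : Fin (n + 1) → L) :
    nestedBracket (List.ofFn (Fin.snoc p (p (Fin.last n)) : Fin (n + 2) → L)) = 0 := by
  simp only [List.ofFn_succ', Fin.snoc_castSucc, Fin.snoc_last, List.concat_eq_append,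
    List.append_assoc, List.singleton_append]
  exact nestedBracket_append_self_self _ _

theorem smul_nestedBracket_ofFn_snoc {k : ℕ} (hder : ∀ P : L →ₗ[F] L, IsLeibnizDerivation k P)
    {f : L →ₗ[F] F} {p : Fin k → L} (hp : ∀ i, f (p i) = 0) (z c : L) :
    f (nestedBracket (List.ofFn (Fin.snoc p z : Fin (k + 1) → L))) • c =
      f z • nestedBracket (List.ofFn (Fin.snoc p c : Fin (k + 1) → L)) := by
  have h := hder (f.smulRight c) (Fin.snoc p z)
  simp only [LinearMap.smulRight_apply, Fin.sum_univ_castSucc, Fin.snoc_last,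
    Fin.update_snoc_last] at h
  rw [h, sum_eq_zero, zero_add, nestedBracket_ofFn_snoc (F := F),
    nestedBracket_ofFn_snoc (F := F), map_smul]
  intro i _
  apply nestedBracket_eq_zero_of_zero_mem
  exact List.mem_ofFn.mpr ⟨i.castSucc, by simp [hp]⟩

theorem exists_nestedBracket_ofFn_snoc_eq_smul {k : ℕ}
    (hder : ∀ P : L →ₗ[F] L, IsLeibnizDerivation k P) {p : Fin k → L}
    (hp : Submodule.span F (Set.range p) ≠ ⊤) :
    ∃ μ : F, ∀ c, nestedBracket (List.ofFn (Fin.snoc p c : Fin (k + 1) → L)) = μ • c := by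
  obtain ⟨z, hz⟩ : ∃ z, z ∉ Submodule.span F (Set.range p) := by
    simpa [Submodule.eq_top_iff'] using hp
  obtain ⟨f, hfz, hf⟩ := Submodule.exists_le_ker_of_notMem hz
  have hfp : ∀ i, f (p i) = 0 := fun i => hf (Submodule.subset_span ⟨i, rfl⟩)
  refine ⟨(f z)⁻¹ * f (nestedBracket (List.ofFn (Fin.snoc p z : Fin (k + 1) → L))), fun c => ?_⟩
  rw [mul_smul, smul_nestedBracket_ofFn_snoc hder hfp, inv_smul_smul₀ hfz]

theorem nestedBracket_ofFn_snoc_eq_zero_of_span_ne_top {n : ℕ}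
    (hder : ∀ P : L →ₗ[F] L, IsLeibnizDerivation (n + 1) P) {p : Fin (n + 1) → L}
    (hp : Submodule.span F (Set.range p) ≠ ⊤) (c : L) :
    nestedBracket (List.ofFn (Fin.snoc p c : Fin (n + 2) → L)) = 0 := by
  obtain ⟨μ, hμ⟩ := exists_nestedBracket_ofFn_snoc_eq_smul hder hp
  have hlast : μ • p (Fin.last n) = 0 := by rw [← hμ, nestedBracket_ofFn_snoc_last]
  rcases smul_eq_zero.mp hlast with hμ0 | hp0
  · rw [hμ, hμ0, zero_smul]
  · exact nestedBracket_eq_zero_of_zero_mem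
      (List.mem_ofFn.mpr ⟨(Fin.last n).castSucc, by simp [hp0]⟩)

theorem ad_pow_eq_zero_of_forall_isLeibnizDerivation {n : ℕ}
    (hder : ∀ P : L →ₗ[F] L, IsLeibnizDerivation (n + 1) P) (a : L) :
    ad F L a ^ (n + 1) = 0 := by
  by_cases ha : Submodule.span F {a} = ⊤
  · suffices ad F L a = 0 by rw [this, zero_pow n.succ_ne_zero]
    ext u
    obtain ⟨t, rfl⟩ := Submodule.mem_span_singleton.mp (ha ▸ Submodule.mem_top (x := u))
    simp
  ext c
  have h := nestedBracket_ofFn_snoc_eq_zero_of_span_ne_top hder (p := fun _ => a)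
    (by rwa [Set.range_const]) c
  rwa [nestedBracket_ofFn_snoc (F := F), List.ofFn_const, List.map_replicate,
    List.prod_replicate] at h

theorem isNilpotent_of_forall_isLeibnizDerivation [Module.Finite F L] {n : ℕ}
    (hder : ∀ P : L →ₗ[F] L, IsLeibnizDerivation (n + 1) P) : LieRing.IsNilpotent L :=
  (isNilpotent_iff_forall (R := F)).mpr fun a =>
    ⟨n + 1, ad_pow_eq_zero_of_forall_isLeibnizDerivation hder a⟩

theorem nestedBracket_ofFn_cons_eq_zero_of_mem_center {n : ℕ}
    (hder : ∀ P : L →ₗ[F] L, IsLeibnizDerivation (n + 1) P) {z : L} (hz : z ∈ center F L)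
    (hz0 : z ≠ 0) (c : L) (p : Fin (n + 1) → L) :
    nestedBracket (List.ofFn (Fin.cons c p : Fin (n + 2) → L)) = 0 := by
  have hzu : ∀ u : L, ⁅z, u⁆ = 0 := fun u => by
    rw [← lie_skew, (LieModule.mem_maxTrivSubmodule F L L z).mp hz u, neg_zero]
  obtain ⟨f, hfz⟩ := Module.Projective.exists_dual_eq_one F hz0
  have h := hder (f.smulRight c) (Fin.cons z p)
  rw [Fin.sum_univ_succ] at h
  simp only [Fin.cons_zero, Fin.update_cons_zero, ← Fin.cons_update, nestedBracket_ofFn_cons, hzu,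
    sum_const_zero, add_zero, map_zero, LinearMap.smulRight_apply, hfz, one_smul] at h
  rw [nestedBracket_ofFn_cons, h]

end

theorem nestedBrackets_vanish_iff_all_endos_leibnizDerivations
    {F L : Type*} [Field F] [LieRing L] [LieAlgebra F L] {k : ℕ} (hk : 1 ≤ k) :
    (∀ x : Fin (k + 1) → L, nestedBracket (List.ofFn x) = 0) ↔
      ∀ P : L →ₗ[F] L, IsLeibnizDerivation k P := by
  refine ⟨fun h P x => ?_, fun hder x => ?_⟩
  · rw [h x, map_zero]
    exact (sum_eq_zero fun i _ => h _).symm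
  obtain ⟨n, rfl⟩ := Nat.exists_eq_add_of_le' hk
  by_cases hx : Submodule.span F (Set.range (Fin.init x)) = ⊤
  · have : Module.Finite F L :=
      Module.finite_def.mpr (Submodule.fg_def.mpr ⟨_, Set.finite_range _, hx⟩)
    have := isNilpotent_of_forall_isLeibnizDerivation hder
    rcases subsingleton_or_nontrivial L with _ | _
    · exact Subsingleton.elim _ _
    have := non_trivial_center_of_isNilpotent (R := F) (L := L)
    obtain ⟨⟨z, hz⟩, hz0⟩ := exists_ne (0 : center F L)
    rw [← Fin.cons_self_tail x]
    exact nestedBracket_ofFn_cons_eq_zero_of_mem_center hder hz (by simpa using hz0) _ _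
  · rw [← Fin.snoc_init_self x]
    exact nestedBracket_ofFn_snoc_eq_zero_of_span_ne_top hder hx _
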